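/- arXiv:1811.12700 — 5 statements merged into one kernel-verified Lean document; each statement's English description precedes it below -/
import Mathlib

section
/- If f : ℝ → ℝ is lower semi-continuous at every point outside a countable set D ⊆ ℝ, then f is Borel measurable. -/
/-- If `f : ℝ → ℝ` is lower semi-continuous at every point outside a countable
set `D`, then `f` is Borel measurable. -/
theorem measurable_of_lowerSemicontinuousAt_compl_countable (f : ℝ → ℝ)
    (D : Set ℝ) (hD : D.Countable)
    (hf : ∀ x ∉ D, LowerSemicontinuousAt f x) : Measurable f := by
  apply measurable_of_Ioi
  intro c
  set S : Set ℝ := f ⁻¹' Set.Ioi c with hS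
  have hsub : S ⊆ interior S ∪ (S ∩ D) := by
    intro x hx
    by_cases hxD : x ∈ D
    · exact Or.inr ⟨hx, hxD⟩
    · left
      rw [mem_interior_iff_mem_nhds]
      exact (hf x hxD) c hx
  have heq : S = interior S ∪ (S ∩ D) := by
    apply Set.Subset.antisymm hsub
    exact Set.union_subset interior_subset (Set.inter_subset_left)
  rw [heq]
  exact isOpen_interior.measurableSet.union
    ((hD.mono Set.inter_subset_right).measurableSet)
end

section
/- If f : ℝ → ℝ is upper semi-continuous at every point outside a countable set D ⊆ ℝ, then f is Borel measurable. -/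
/-- If `f : ℝ → ℝ` is upper semi-continuous at every point outside a countable
set `D`, then `f` is Borel measurable. -/
theorem measurable_of_upperSemicontinuousAt_compl_countable (f : ℝ → ℝ)
    (D : Set ℝ) (hD : D.Countable)
    (hf : ∀ x ∉ D, UpperSemicontinuousAt f x) : Measurable f := by
  apply measurable_of_Iio
  intro c
  have key : f ⁻¹' Set.Iio c =
      interior (f ⁻¹' Set.Iio c) ∪ (f ⁻¹' Set.Iio c ∩ D) := by
    apply Set.Subset.antisymm
    · intro x hx
      by_cases hxD : x ∈ D
      · exact Or.inr ⟨hx, hxD⟩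
      · left
        rw [mem_interior_iff_mem_nhds]
        exact hf x hxD c hx
    · rintro x (hx | hx)
      · exact interior_subset hx
      · exact hx.1
  rw [key]
  exact isOpen_interior.measurableSet.union
    ((hD.mono Set.inter_subset_right).measurableSet)
end

section
/- If f : ℝ → ℝ is right-continuous at every point outside a countable set D ⊆ ℝ, then f is Borel measurable. -/
open Filter Topology Set

/-- If `f : ℝ → ℝ` is right-continuous at every point outside a countable set
`D`, then `f` is Borel measurable. -/
theorem measurable_of_rightContinuousAt_compl_countable (f : ℝ → ℝ)
    (D : Set ℝ) (hD : D.Countable)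
    (hf : ∀ x ∉ D, ContinuousWithinAt f (Set.Ici x) x) : Measurable f := by
  classical
  have hDm : MeasurableSet D := hD.measurableSet
  -- right dyadic approximation
  set s : ℕ → ℝ → ℝ := fun n x => (⌊(2:ℝ)^n * x⌋ + 1) / 2^n with hs
  have hpow : ∀ n : ℕ, (0:ℝ) < 2^n := fun n => by positivity
  have hle : ∀ n x, x ≤ s n x := by
    intro n x
    rw [hs, le_div_iff₀ (hpow n)]
    have := Int.lt_floor_add_one ((2:ℝ)^n * x)
    linarith [this]
  have hub : ∀ n x, s n x ≤ x + (1/2)^n := by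
    intro n x
    rw [hs, div_le_iff₀ (hpow n)]
    have := Int.floor_le ((2:ℝ)^n * x)
    have h2 : ((1:ℝ)/2)^n * 2^n = 1 := by
      rw [← mul_pow]; norm_num
    nlinarith [hpow n]
  have hsmeas : ∀ n, Measurable fun x => f (s n x) := by
    intro n
    have : (fun x => f (s n x)) =
        (fun k : ℤ => f ((k + 1) / 2^n)) ∘ fun x => ⌊(2:ℝ)^n * x⌋ := rfl
    rw [this]
    exact (measurable_of_countable _).comp
      (Int.measurable_floor.comp (measurable_const.mul measurable_id))
  have htend : ∀ x ∉ D, Tendsto (fun n => f (s n x)) atTop (𝓝 (f x)) := by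
    intro x hx
    have hts : Tendsto (fun n => s n x) atTop (𝓝 x) := by
      have h1 : Tendsto (fun n : ℕ => x + (1/2:ℝ)^n) atTop (𝓝 (x + 0)) :=
        tendsto_const_nhds.add (tendsto_pow_atTop_nhds_zero_of_lt_one (by norm_num) (by norm_num))
      rw [add_zero] at h1
      exact tendsto_of_tendsto_of_tendsto_of_le_of_le tendsto_const_nhds h1
        (fun n => hle n x) (fun n => hub n x)
    have hmem : Tendsto (fun n => s n x) atTop (𝓝[Set.Ici x] x) :=
      tendsto_nhdsWithin_of_tendsto_nhds_of_eventually_within _ hts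
        (Eventually.of_forall fun n => hle n x)
    exact (hf x hx).tendsto.comp hmem
  -- auxiliary measurable function agreeing with f off D
  set F : ℝ → ℝ := D.piecewise 0 f with hF
  have hgn : ∀ n, Measurable (D.piecewise (0 : ℝ → ℝ) fun x => f (s n x)) :=
    fun n => Measurable.piecewise hDm measurable_const (hsmeas n)
  have hFmeas : Measurable F := by
    apply measurable_of_tendsto_metrizable hgn
    rw [tendsto_pi_nhds]
    intro x
    by_cases hx : x ∈ D
    · simpa [hF, Set.piecewise, hx] using tendsto_const_nhds
    · simpa [hF, Set.piecewise, hx] using htend x hx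
  refine hFmeas.measurable_of_countable_ne (hD.mono ?_)
  intro x hx
  by_contra hxD
  exact hx (by simp [hF, Set.piecewise, hxD])
end

section
/- If f : ℝ → ℝ is left-continuous at every point outside a countable set D ⊆ ℝ, then f is Borel measurable. -/
open Filter Topology

/-! Rounding down to the dyadic grid `2⁻ⁿ ℤ` approximates every point from the left, so at
each point outside `D` the values `f (⌊2ⁿ x⌋ / 2ⁿ)` converge to `f x`. Each of these functions
factors through `ℤ`, hence is measurable; on the countable set `D` measurability is automatic. -/

noncomputable def dyadicFloor (n : ℕ) (x : ℝ) : ℝ := ⌊x * 2 ^ n⌋ / 2 ^ n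

lemma dyadicFloor_le (n : ℕ) (x : ℝ) : dyadicFloor n x ≤ x := by
  rw [dyadicFloor, div_le_iff₀ (by positivity)]
  exact Int.floor_le _

lemma sub_inv_two_pow_le_dyadicFloor (n : ℕ) (x : ℝ) : x - (2 ^ n)⁻¹ ≤ dyadicFloor n x := by
  rw [dyadicFloor, inv_eq_one_div, sub_le_iff_le_add, ← add_div,
    le_div_iff₀ (by positivity)]
  exact (Int.lt_floor_add_one _).le

lemma tendsto_dyadicFloor_nhdsLE (x : ℝ) :
    Tendsto (fun n => dyadicFloor n x) atTop (𝓝[≤] x) := by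
  have hinv : Tendsto (fun n : ℕ => ((2 : ℝ) ^ n)⁻¹) atTop (𝓝 0) :=
    tendsto_inv_atTop_zero.comp (tendsto_pow_atTop_atTop_of_one_lt one_lt_two)
  have hlower : Tendsto (fun n : ℕ => x - (2 ^ n)⁻¹) atTop (𝓝 x) := by
    simpa using tendsto_const_nhds.sub hinv
  refine tendsto_nhdsWithin_of_tendsto_nhds_of_eventually_within _ ?_
    (Eventually.of_forall fun n => dyadicFloor_le n x)
  exact tendsto_of_tendsto_of_tendsto_of_le_of_le hlower tendsto_const_nhds
    (sub_inv_two_pow_le_dyadicFloor · x) (dyadicFloor_le · x)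

lemma measurable_comp_dyadicFloor {β : Type*} [MeasurableSpace β] (f : ℝ → β) (n : ℕ) :
    Measurable fun x => f (dyadicFloor n x) :=
  (measurable_of_countable fun k : ℤ => f (k / 2 ^ n)).comp (measurable_id.mul_const _).floor

lemma measurable_of_tendsto_metrizable_of_countable_compl {α β : Type*} [MeasurableSpace α]
    [MeasurableSingletonClass α] [TopologicalSpace β] [TopologicalSpace.PseudoMetrizableSpace β]
    [MeasurableSpace β] [BorelSpace β] {f : α → β} {F : ℕ → α → β} {D : Set α}
    (hD : D.Countable) (hF : ∀ n, Measurable (F n))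
    (hlim : ∀ x ∉ D, Tendsto (fun n => F n x) atTop (𝓝 (f x))) : Measurable f := by
  have : Countable D := hD.to_subtype
  refine measurable_of_restrict_of_restrict_compl hD.measurableSet (measurable_of_countable _) ?_
  exact measurable_of_tendsto_metrizable (fun n => (hF n).comp measurable_subtype_coe)
    (tendsto_pi_nhds.2 fun x => hlim x x.2)

/-- If `f : ℝ → ℝ` is left-continuous at every point outside a countable set
`D`, then `f` is Borel measurable. -/
theorem measurable_of_leftContinuousAt_compl_countable (f : ℝ → ℝ)
    (D : Set ℝ) (hD : D.Countable)
    (hf : ∀ x ∉ D, ContinuousWithinAt f (Set.Iic x) x) : Measurable f :=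
  measurable_of_tendsto_metrizable_of_countable_compl hD (measurable_comp_dyadicFloor f)
    fun x hx => (hf x hx).tendsto.comp (tendsto_dyadicFloor_nhdsLE x)
end

section
/- A bounded function f : [a,b] → ℝ on a compact interval [a,b] (a ≤ b) is Riemann integrable if and only if the set of points of [a,b] at which f is discontinuous has Lebesgue measure zero. -/
open MeasureTheory

/-- A tagged partition of the interval `[a, b]`: finitely many points
`a = x₀ < x₁ < ⋯ < xₙ = b` together with tags `tᵢ ∈ [xᵢ, xᵢ₊₁]`. -/
structure TaggedPartition (a b : ℝ) where
  n : ℕ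
  points : ℕ → ℝ
  tags : ℕ → ℝ
  point_zero : points 0 = a
  point_last : points n = b
  mono : ∀ i < n, points i < points (i + 1)
  tag_mem : ∀ i < n, tags i ∈ Set.Icc (points i) (points (i + 1))

/-- The Riemann sum of `f` over a tagged partition. -/
def riemannSum (f : ℝ → ℝ) {a b : ℝ} (P : TaggedPartition a b) : ℝ :=
  ∑ i ∈ Finset.range P.n, f (P.tags i) * (P.points (i + 1) - P.points i)

/-- `f` has Riemann integral `I` on `[a, b]`: the Riemann sums converge to
`I` as the mesh of the tagged partitions tends to `0`. -/
def HasRiemannIntegral (f : ℝ → ℝ) (a b : ℝ) (I : ℝ) : Prop :=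
  ∀ ε > 0, ∃ δ > 0, ∀ P : TaggedPartition a b,
    (∀ i < P.n, P.points (i + 1) - P.points i ≤ δ) →
      |riemannSum f P - I| < ε

/-- `f` is Riemann integrable on `[a, b]`. -/
def RiemannIntegrable (f : ℝ → ℝ) (a b : ℝ) : Prop :=
  ∃ I : ℝ, HasRiemannIntegral f a b I

/-!
If `f` is Riemann integrable, two retaggings of one fine partition have close Riemann sums;
taking tags near the supremum and the infimum on each interval shows that the oscillation sum
(upper minus lower Darboux sum) of every fine partition is small. The points where `f` oscillates
by at least `η` lie, up to the finitely many partition points, in intervals of oscillation at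
least `η`, whose total length is at most the oscillation sum divided by `η`. So each of these
sets is null, and the discontinuity set is their countable union.

Conversely, if the discontinuities are null, cover them by an open set `U` of small measure. On
the compact set `[a, b] \ U` the function is continuous, so its oscillation there is uniformly
small: in a fine partition every interval either lies in `U`, and these have small total length,
or has small oscillation. Hence the oscillation sum is small. Being bounded and a.e. continuous,
`f` is Lebesgue integrable, and the oscillation sum bounds the distance from every Riemann sum to
the Lebesgue integral.
-/

open Set Metric
open scoped ENNReal Topology

lemma exists_eq_or_mem_Ioo_of_mem_Icc (x : ℕ → ℝ) (n : ℕ) {z : ℝ} (hz : z ∈ Icc (x 0) (x n)) :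
    (∃ i ≤ n, z = x i) ∨ ∃ i < n, z ∈ Ioo (x i) (x (i + 1)) := by
  induction n with
  | zero => exact .inl ⟨0, le_rfl, le_antisymm hz.2 hz.1⟩
  | succ m ih =>
    by_cases hzm : z ≤ x m
    · rcases ih ⟨hz.1, hzm⟩ with ⟨i, hi, rfl⟩ | ⟨i, hi, hzi⟩
      exacts [.inl ⟨i, by omega, rfl⟩, .inr ⟨i, by omega, hzi⟩]
    · rcases hz.2.eq_or_lt with rfl | hlt
      exacts [.inl ⟨m + 1, le_rfl, rfl⟩, .inr ⟨m, by omega, not_le.mp hzm, hlt⟩]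

lemma exists_diam_image_lt {f : ℝ → ℝ} {s : Set ℝ} (hs : s.Nonempty)
    (hf : Bornology.IsBounded (f '' s)) {κ : ℝ} (hκ : 0 < κ) :
    ∃ x ∈ s, ∃ y ∈ s, diam (f '' s) < f x - f y + κ := by
  obtain ⟨_, ⟨x, hx, rfl⟩, hx'⟩ :=
    exists_lt_of_lt_csSup (hs.image f) (sub_lt_self (sSup (f '' s)) (half_pos hκ))
  obtain ⟨_, ⟨y, hy, rfl⟩, hy'⟩ :=
    exists_lt_of_csInf_lt (hs.image f) (lt_add_of_pos_right (sInf (f '' s)) (half_pos hκ))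
  refine ⟨x, hx, y, hy, ?_⟩
  rw [Real.diam_eq hf]
  linarith

lemma oscillationWithin_le_ediam_image {E F : Type*} [TopologicalSpace E] [PseudoEMetricSpace F]
    {f : E → F} {s t : Set E} {x : E} (ht : t ∈ 𝓝[s] x) :
    oscillationWithin f s x ≤ ediam (f '' t) :=
  biInf_le _ (Filter.image_mem_map ht)

lemma measure_setOf_ne_zero_eq_zero {α : Type*} [MeasurableSpace α] {μ : Measure α}
    {g : α → ℝ≥0∞} {s : Set α} (h : ∀ η : ℝ, 0 < η → μ {x ∈ s | ENNReal.ofReal η ≤ g x} = 0) :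
    μ {x ∈ s | g x ≠ 0} = 0 := by
  refine measure_mono_null (fun x ⟨hx, hgx⟩ ↦ ?_)
    (measure_iUnion_null fun n : ℕ ↦ h (1 / (n + 1)) Nat.one_div_pos_of_nat)
  obtain ⟨r, -, hr0, hr⟩ := ENNReal.lt_iff_exists_real_btwn.1 (pos_iff_ne_zero.2 hgx)
  obtain ⟨n, hn⟩ := exists_nat_one_div_lt (ENNReal.ofReal_pos.1 hr0)
  exact mem_iUnion.2 ⟨n, hx, (ENNReal.ofReal_le_ofReal hn.le).trans hr.le⟩

lemma integrableOn_of_measure_discontinuities_eq_zero {α : Type*} [TopologicalSpace α]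
    [MeasurableSpace α] [OpensMeasurableSpace α] {μ : Measure α} {f : α → ℝ} {s : Set α}
    (hs : MeasurableSet s) (hμs : μ s < ∞) (hf : Bornology.IsBounded (f '' s))
    (hD : μ {x ∈ s | ¬ ContinuousWithinAt f s x} = 0) : IntegrableOn f s μ := by
  set D := toMeasurable μ {x ∈ s | ¬ ContinuousWithinAt f s x}
  have hcont : ContinuousOn f (s \ D) := fun x hx ↦
    (not_not.1 fun hc ↦ hx.2 (subset_toMeasurable _ _ ⟨hx.1, hc⟩)).mono sdiff_subset
  have hrestrict : μ.restrict (s \ D) = μ.restrict s :=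
    Measure.restrict_congr_set (sdiff_null_ae_eq_self (by rwa [measure_toMeasurable]))
  obtain ⟨C, hC⟩ := isBounded_iff_forall_norm_le.1 hf
  refine IntegrableOn.of_bound hμs ?_ C (ae_restrict_of_forall_mem hs fun x hx ↦ hC _ ⟨x, hx, rfl⟩)
  rw [← hrestrict]
  exact hcont.aestronglyMeasurable (hs.diff (measurableSet_toMeasurable _ _))

lemma abs_mul_sub_integral_le {f : ℝ → ℝ} {p q t : ℝ} (hpq : p ≤ q) (ht : t ∈ Icc p q)
    (hint : IntervalIntegrable f volume p q) (hf : Bornology.IsBounded (f '' Icc p q)) :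
    |f t * (q - p) - ∫ x in p..q, f x| ≤ diam (f '' Icc p q) * (q - p) := by
  have h := intervalIntegral.norm_integral_le_of_norm_le_const (a := p) (b := q)
    (f := fun x ↦ f x - f t) (C := diam (f '' Icc p q)) fun x hx ↦ by
      rw [uIoc_of_le hpq] at hx
      exact dist_le_diam_of_mem hf ⟨x, Ioc_subset_Icc_self hx, rfl⟩ ⟨t, ht, rfl⟩
  rw [intervalIntegral.integral_sub hint intervalIntegrable_const, intervalIntegral.integral_const,
    smul_eq_mul, Real.norm_eq_abs, abs_sub_comm, abs_of_nonneg (sub_nonneg.2 hpq)] at h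
  rwa [mul_comm] at h

lemma mul_div_two_mul_add_one_le {x ε : ℝ} (hx : 0 ≤ x) (hε : 0 ≤ ε) :
    x * (ε / (2 * (x + 1))) ≤ ε / 2 := by
  rw [mul_div_assoc', div_le_div_iff₀ (by positivity) two_pos]
  nlinarith

namespace TaggedPartition

variable {a b : ℝ} (P : TaggedPartition a b)

def MeshLE (δ : ℝ) : Prop :=
  ∀ i < P.n, P.points (i + 1) - P.points i ≤ δ

def retag (t : ℕ → ℝ) (ht : ∀ i < P.n, t i ∈ Icc (P.points i) (P.points (i + 1))) :
    TaggedPartition a b :=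
  { P with tags := t, tag_mem := ht }

noncomputable def oscillationSum (f : ℝ → ℝ) : ℝ :=
  ∑ i ∈ Finset.range P.n,
    diam (f '' Icc (P.points i) (P.points (i + 1))) * (P.points (i + 1) - P.points i)

lemma points_mono {i j : ℕ} (hij : i ≤ j) (hj : j ≤ P.n) : P.points i ≤ P.points j := by
  induction j, hij using Nat.le_induction with
  | base => exact le_rfl
  | succ k _ ih => exact (ih (by omega)).trans (P.mono k (by omega)).le

lemma left_le_right (P : TaggedPartition a b) : a ≤ b := by
  simpa only [P.point_zero, P.point_last] using P.points_mono (Nat.zero_le P.n) le_rfl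

lemma Icc_points_subset {i : ℕ} (hi : i < P.n) :
    Icc (P.points i) (P.points (i + 1)) ⊆ Icc a b := by
  apply Icc_subset_Icc
  · simpa only [P.point_zero] using P.points_mono (Nat.zero_le i) hi.le
  · simpa only [P.point_last] using P.points_mono hi le_rfl

lemma sum_length : ∑ i ∈ Finset.range P.n, (P.points (i + 1) - P.points i) = b - a := by
  rw [Finset.sum_range_sub, P.point_last, P.point_zero]

lemma exists_eq_or_mem_Ioo {z : ℝ} (hz : z ∈ Icc a b) :
    (∃ i ≤ P.n, z = P.points i) ∨ ∃ i < P.n, z ∈ Ioo (P.points i) (P.points (i + 1)) :=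
  exists_eq_or_mem_Ioo_of_mem_Icc P.points P.n (by rwa [P.point_zero, P.point_last])

lemma ofReal_sum_length_le_volume {s : Finset ℕ} (hs : ∀ i ∈ s, i < P.n) {U : Set ℝ}
    (hU : ∀ i ∈ s, Ioo (P.points i) (P.points (i + 1)) ⊆ U) :
    ENNReal.ofReal (∑ i ∈ s, (P.points (i + 1) - P.points i)) ≤ volume U := by
  have hdisj : (s : Set ℕ).PairwiseDisjoint fun i ↦ Ioo (P.points i) (P.points (i + 1)) := by
    intro i hi j hj hij
    wlog hlt : i < j generalizing i j
    · exact (this hj hi hij.symm (by omega)).symm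
    exact (Iio_disjoint_Ici (P.points_mono hlt (hs j hj).le)).mono Ioo_subset_Iio_self
      (Ioo_subset_Ioi_self.trans Ioi_subset_Ici_self)
  calc ENNReal.ofReal (∑ i ∈ s, (P.points (i + 1) - P.points i))
      = ∑ i ∈ s, volume (Ioo (P.points i) (P.points (i + 1))) := by
        rw [ENNReal.ofReal_sum_of_nonneg fun i hi ↦ sub_nonneg.2 (P.mono i (hs i hi)).le]
        simp only [Real.volume_Ioo]
    _ = volume (⋃ i ∈ s, Ioo (P.points i) (P.points (i + 1))) :=
        (measure_biUnion_finset hdisj fun _ _ ↦ measurableSet_Ioo).symm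
    _ ≤ volume U := measure_mono (iUnion₂_subset hU)

lemma volume_biUnion_Icc_le {s : Finset ℕ} (hs : ∀ i ∈ s, i < P.n) :
    volume (⋃ i ∈ s, Icc (P.points i) (P.points (i + 1)))
      ≤ ENNReal.ofReal (∑ i ∈ s, (P.points (i + 1) - P.points i)) := by
  rw [ENNReal.ofReal_sum_of_nonneg fun i hi ↦ sub_nonneg.2 (P.mono i (hs i hi)).le]
  simpa only [Real.volume_Icc] using measure_biUnion_finset_le (μ := volume) s
    fun i ↦ Icc (P.points i) (P.points (i + 1))

lemma exists_meshLE {δ : ℝ} (hab : a ≤ b) (hδ : 0 < δ) : ∃ P : TaggedPartition a b, P.MeshLE δ := by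
  set n := ⌈(b - a) / δ⌉₊
  set h := (b - a) / n
  have hh : 0 ≤ h := div_nonneg (sub_nonneg.2 hab) n.cast_nonneg
  have hstep (i : ℕ) : a + (i + 1 : ℕ) * h - (a + i * h) = h := by push_cast; ring
  refine ⟨⟨n, fun i ↦ a + i * h, fun i ↦ a + i * h, by simp, ?_, fun i hi ↦ ?_,
    fun i _ ↦ ⟨le_rfl, by linarith [hstep i]⟩⟩, fun i hi ↦ (hstep i).trans_le ?_⟩
  · rcases eq_or_ne n 0 with hn | hn
    · have : b - a ≤ 0 := by simpa [n, div_nonpos_iff, hδ.not_ge, hδ.le] using hn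
      simp only [hn, CharP.cast_eq_zero, zero_mul, add_zero]
      linarith
    · simp only [h, mul_div_cancel₀ _ (Nat.cast_ne_zero.2 hn : (n : ℝ) ≠ 0)]
      ring
  · have hba : 0 < b - a := by
      simpa [n, div_pos_iff, hδ, hδ.not_gt] using (Nat.zero_le i).trans_lt hi
    linarith [hstep i, div_pos hba (Nat.cast_pos.2 ((Nat.zero_le i).trans_lt hi))]
  · have hceil := Nat.le_ceil ((b - a) / δ)
    rw [div_le_iff₀ hδ] at hceil
    rw [div_le_iff₀ (Nat.cast_pos.2 ((Nat.zero_le i).trans_lt hi))]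
    linarith

variable {f : ℝ → ℝ}

lemma exists_oscillationSum_le_riemannSum_sub (hf : Bornology.IsBounded (f '' Icc a b))
    {κ : ℝ} (hκ : 0 < κ) :
    ∃ t ht t' ht', P.oscillationSum f
      ≤ riemannSum f (P.retag t ht) - riemannSum f (P.retag t' ht') + κ := by
  have hκ' : 0 < κ / (b - a + 1) := div_pos hκ (by linarith [P.left_le_right])
  have hchoice : ∀ i < P.n, ∃ x ∈ Icc (P.points i) (P.points (i + 1)),
      ∃ y ∈ Icc (P.points i) (P.points (i + 1)),
        diam (f '' Icc (P.points i) (P.points (i + 1))) < f x - f y + κ / (b - a + 1) :=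
    fun i hi ↦ exists_diam_image_lt (nonempty_Icc.2 (P.mono i hi).le)
      (hf.subset (image_mono (P.Icc_points_subset hi))) hκ'
  choose! t ht t' ht' hlt using hchoice
  refine ⟨t, ht, t', ht', ?_⟩
  calc P.oscillationSum f
      ≤ ∑ i ∈ Finset.range P.n, (f (t i) - f (t' i) + κ / (b - a + 1))
          * (P.points (i + 1) - P.points i) := by
        refine Finset.sum_le_sum fun i hi ↦ ?_
        have hi := Finset.mem_range.1 hi
        exact mul_le_mul_of_nonneg_right (hlt i hi).le (sub_nonneg.2 (P.mono i hi).le)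
    _ = riemannSum f (P.retag t ht) - riemannSum f (P.retag t' ht')
          + κ / (b - a + 1) * (b - a) := by
        simp only [riemannSum, retag, add_mul, sub_mul, Finset.sum_add_distrib,
          Finset.sum_sub_distrib, ← Finset.mul_sum, P.sum_length]
    _ ≤ _ := by
        have hba := P.left_le_right
        gcongr
        rw [div_mul_eq_mul_div, div_le_iff₀ (by linarith)]
        nlinarith

lemma oscillationSum_le (hf : Bornology.IsBounded (f '' Icc a b)) {s : Finset ℕ}
    (hs : s ⊆ Finset.range P.n) {η : ℝ} (hη : 0 ≤ η)
    (hdiam : ∀ i < P.n, i ∉ s → diam (f '' Icc (P.points i) (P.points (i + 1))) ≤ η) :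
    P.oscillationSum f ≤ diam (f '' Icc a b) * ∑ i ∈ s, (P.points (i + 1) - P.points i)
      + η * (b - a) := by
  have hlen : ∀ i ∈ Finset.range P.n, 0 ≤ P.points (i + 1) - P.points i :=
    fun i hi ↦ sub_nonneg.2 (P.mono i (Finset.mem_range.1 hi)).le
  rw [oscillationSum, ← Finset.sum_sdiff hs, add_comm, Finset.mul_sum, ← P.sum_length,
    Finset.mul_sum]
  gcongr with i hi
  · exact hlen i (hs hi)
  · exact diam_mono (image_mono (P.Icc_points_subset (Finset.mem_range.1 (hs hi)))) hf
  calc _ ≤ ∑ i ∈ Finset.range P.n \ s, η * (P.points (i + 1) - P.points i) := by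
        refine Finset.sum_le_sum fun i hi ↦ ?_
        obtain ⟨hin, his⟩ := Finset.mem_sdiff.1 hi
        exact mul_le_mul_of_nonneg_right (hdiam i (Finset.mem_range.1 hin) his) (hlen i hin)
    _ ≤ _ := Finset.sum_le_sum_of_subset_of_nonneg Finset.sdiff_subset fun i hi _ ↦
        mul_nonneg hη (hlen i hi)

lemma mul_sum_length_le_oscillationSum {s : Finset ℕ} (hs : s ⊆ Finset.range P.n) {η : ℝ}
    (hdiam : ∀ i ∈ s, η ≤ diam (f '' Icc (P.points i) (P.points (i + 1)))) :
    η * ∑ i ∈ s, (P.points (i + 1) - P.points i) ≤ P.oscillationSum f := by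
  have hlen : ∀ i ∈ Finset.range P.n, 0 ≤ P.points (i + 1) - P.points i :=
    fun i hi ↦ sub_nonneg.2 (P.mono i (Finset.mem_range.1 hi)).le
  rw [Finset.mul_sum]
  calc ∑ i ∈ s, η * (P.points (i + 1) - P.points i)
      ≤ ∑ i ∈ s, diam (f '' Icc (P.points i) (P.points (i + 1)))
          * (P.points (i + 1) - P.points i) :=
        Finset.sum_le_sum fun i hi ↦ mul_le_mul_of_nonneg_right (hdiam i hi) (hlen i (hs hi))
    _ ≤ P.oscillationSum f := Finset.sum_le_sum_of_subset_of_nonneg hs fun i hi _ ↦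
        mul_nonneg diam_nonneg (hlen i hi)

lemma setOf_le_oscillationWithin_subset (hf : Bornology.IsBounded (f '' Icc a b)) (η : ℝ) :
    {x ∈ Icc a b | ENNReal.ofReal η ≤ oscillationWithin f (Icc a b) x}
      ⊆ P.points '' Iic P.n ∪ ⋃ i ∈ (Finset.range P.n).filter
          (fun i ↦ η ≤ diam (f '' Icc (P.points i) (P.points (i + 1)))),
        Icc (P.points i) (P.points (i + 1)) := by
  rintro z ⟨hz, hosc⟩
  rcases P.exists_eq_or_mem_Ioo hz with ⟨i, hi, rfl⟩ | ⟨i, hi, hzi⟩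
  · exact .inl ⟨i, hi, rfl⟩
  refine .inr (mem_biUnion (Finset.mem_filter.2 ⟨Finset.mem_range.2 hi, ?_⟩)
    (Ioo_subset_Icc_self hzi))
  have hbdd := hf.subset (image_mono (P.Icc_points_subset hi))
  rw [← ENNReal.ofReal_le_ofReal_iff diam_nonneg, diam, ENNReal.ofReal_toReal hbdd.ediam_ne_top]
  exact hosc.trans (oscillationWithin_le_ediam_image
    (mem_nhdsWithin_of_mem_nhds (Icc_mem_nhds hzi.1 hzi.2)))

lemma volume_setOf_le_oscillationWithin_le (hf : Bornology.IsBounded (f '' Icc a b)) {η ε : ℝ}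
    (hη : 0 < η) (hP : P.oscillationSum f < η * ε) :
    volume {x ∈ Icc a b | ENNReal.ofReal η ≤ oscillationWithin f (Icc a b) x}
      ≤ ENNReal.ofReal ε := by
  set bad := (Finset.range P.n).filter
    fun i ↦ η ≤ diam (f '' Icc (P.points i) (P.points (i + 1)))
  have hlen : ∑ i ∈ bad, (P.points (i + 1) - P.points i) < ε :=
    lt_of_mul_lt_mul_left ((P.mul_sum_length_le_oscillationSum (Finset.filter_subset _ _)
      fun i hi ↦ (Finset.mem_filter.1 hi).2).trans_lt hP) hη.le
  calc volume {x ∈ Icc a b | ENNReal.ofReal η ≤ oscillationWithin f (Icc a b) x}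
      ≤ volume (P.points '' Iic P.n) + volume (⋃ i ∈ bad, Icc (P.points i) (P.points (i + 1))) :=
        (measure_mono (P.setOf_le_oscillationWithin_subset hf η)).trans (measure_union_le _ _)
    _ ≤ 0 + ENNReal.ofReal (∑ i ∈ bad, (P.points (i + 1) - P.points i)) := by
        gcongr
        · exact ((finite_Iic P.n).image _).measure_zero volume |>.le
        · exact P.volume_biUnion_Icc_le fun i hi ↦ Finset.mem_range.1 (Finset.mem_filter.1 hi).1
    _ ≤ ENNReal.ofReal ε := by
        rw [zero_add]
        exact ENNReal.ofReal_le_ofReal hlen.le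

lemma abs_riemannSum_sub_integral_le (hint : IntegrableOn f (Icc a b))
    (hf : Bornology.IsBounded (f '' Icc a b)) :
    |riemannSum f P - ∫ x in a..b, f x| ≤ P.oscillationSum f := by
  have hint' : ∀ i < P.n, IntervalIntegrable f volume (P.points i) (P.points (i + 1)) :=
    fun i hi ↦ (hint.mono_set (by
      rw [uIcc_of_le (P.mono i hi).le]; exact P.Icc_points_subset hi)).intervalIntegrable
  have hsum : ∫ x in a..b, f x
      = ∑ i ∈ Finset.range P.n, ∫ x in P.points i..P.points (i + 1), f x := by
    rw [intervalIntegral.sum_integral_adjacent_intervals hint', P.point_zero, P.point_last]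
  rw [hsum, riemannSum, ← Finset.sum_sub_distrib]
  refine (Finset.abs_sum_le_sum_abs _ _).trans (Finset.sum_le_sum fun i hi ↦ ?_)
  have hi := Finset.mem_range.1 hi
  exact abs_mul_sub_integral_le (P.mono i hi).le (P.tag_mem i hi) (hint' i hi)
    (hf.subset (image_mono (P.Icc_points_subset hi)))

lemma exists_forall_meshLE_subset_or_diam_le {U : Set ℝ} (hU : IsOpen U)
    (hcont : ∀ x ∈ Icc a b \ U, ContinuousWithinAt f (Icc a b) x) {η : ℝ} (hη : 0 < η) :
    ∃ δ > 0, ∀ P : TaggedPartition a b, P.MeshLE δ → ∀ i < P.n,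
      Icc (P.points i) (P.points (i + 1)) ⊆ U ∨
        diam (f '' Icc (P.points i) (P.points (i + 1))) ≤ η := by
  obtain ⟨δ, hδ, hosc⟩ := (isCompact_Icc.diff hU).uniform_oscillationWithin (f := f)
    (D := Icc a b) (ε := ENNReal.ofReal η) fun x hx ↦ by
      rw [(hcont x hx).oscillationWithin_eq_zero]
      exact ENNReal.ofReal_pos.2 hη
  refine ⟨δ / 2, half_pos hδ, fun P hP i hi ↦ or_iff_not_imp_left.2 fun hsub ↦ ?_⟩
  obtain ⟨p, hpI, hpU⟩ := not_subset.1 hsub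
  have hball : Icc (P.points i) (P.points (i + 1)) ⊆ ball p δ ∩ Icc a b := by
    intro y hy
    refine ⟨mem_ball.2 ?_, P.Icc_points_subset hi hy⟩
    rw [Real.dist_eq, abs_sub_lt_iff]
    have := hP i hi
    constructor <;> linarith [hy.1, hy.2, hpI.1, hpI.2]
  refine ENNReal.toReal_le_of_le_ofReal hη.le ((ediam_mono (image_mono hball)).trans ?_)
  simpa only [Metric.eball_ofReal] using hosc p ⟨P.Icc_points_subset hi hpI, hpU⟩

lemma exists_forall_meshLE_oscillationSum_le (hab : a ≤ b)
    (hf : Bornology.IsBounded (f '' Icc a b))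
    (hD : volume {x ∈ Icc a b | ¬ ContinuousWithinAt f (Icc a b) x} = 0) {ε : ℝ} (hε : 0 < ε) :
    ∃ δ > 0, ∀ P : TaggedPartition a b, P.MeshLE δ → P.oscillationSum f ≤ ε := by
  classical
  set B := diam (f '' Icc a b)
  have hB : 0 ≤ B := diam_nonneg
  obtain ⟨U, hDU, hU, hUε⟩ := Set.exists_isOpen_lt_of_lt _ (ENNReal.ofReal (ε / (2 * (B + 1))))
    (by rw [hD]; exact ENNReal.ofReal_pos.2 (by positivity))
  obtain ⟨δ, hδ, hfine⟩ := exists_forall_meshLE_subset_or_diam_le (f := f) hU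
    (fun x hx ↦ not_not.1 fun hc ↦ hx.2 (hDU ⟨hx.1, hc⟩)) (η := ε / (2 * (b - a + 1)))
    (by have := sub_nonneg.2 hab; positivity)
  refine ⟨δ, hδ, fun P hP ↦ ?_⟩
  set s := (Finset.range P.n).filter fun i ↦ Icc (P.points i) (P.points (i + 1)) ⊆ U
  have hs : ∀ i ∈ s, i < P.n := fun i hi ↦ Finset.mem_range.1 (Finset.mem_filter.1 hi).1
  have hlen : ∑ i ∈ s, (P.points (i + 1) - P.points i) ≤ ε / (2 * (B + 1)) := by
    refine (ENNReal.ofReal_le_ofReal_iff (by positivity)).1 ?_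
    refine (P.ofReal_sum_length_le_volume hs fun i hi ↦ ?_).trans hUε.le
    exact Ioo_subset_Icc_self.trans (Finset.mem_filter.1 hi).2
  calc P.oscillationSum f
      ≤ B * ∑ i ∈ s, (P.points (i + 1) - P.points i) + ε / (2 * (b - a + 1)) * (b - a) :=
        P.oscillationSum_le hf (Finset.filter_subset _ _) (by have := sub_nonneg.2 hab; positivity)
          fun i hi his ↦ (hfine P hP i hi).resolve_left
            fun hsub ↦ his (Finset.mem_filter.2 ⟨Finset.mem_range.2 hi, hsub⟩)
    _ ≤ B * (ε / (2 * (B + 1))) + ε / (2 * (b - a + 1)) * (b - a) := by gcongr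
    _ ≤ ε / 2 + ε / 2 := by
        rw [mul_comm _ (b - a)]
        gcongr <;> exact mul_div_two_mul_add_one_le (by linarith) hε.le
    _ = ε := add_halves ε

end TaggedPartition

namespace HasRiemannIntegral

variable {f : ℝ → ℝ} {a b I : ℝ}

lemma exists_oscillationSum_lt (hI : HasRiemannIntegral f a b I)
    (hf : Bornology.IsBounded (f '' Icc a b)) {c : ℝ} (hc : 0 < c) :
    ∃ δ > 0, ∀ P : TaggedPartition a b, P.MeshLE δ → P.oscillationSum f < c := by
  obtain ⟨δ, hδ, hP⟩ := hI (c / 3) (by positivity)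
  refine ⟨δ, hδ, fun P hmesh ↦ ?_⟩
  obtain ⟨t, ht, t', ht', hle⟩ :=
    P.exists_oscillationSum_le_riemannSum_sub hf (κ := c / 3) (by positivity)
  have h₁ := abs_lt.1 (hP (P.retag t ht) hmesh)
  have h₂ := abs_lt.1 (hP (P.retag t' ht') hmesh)
  linarith [h₁.1, h₂.2]

lemma volume_setOf_le_oscillationWithin_eq_zero (hI : HasRiemannIntegral f a b I) (hab : a ≤ b)
    (hf : Bornology.IsBounded (f '' Icc a b)) {η : ℝ} (hη : 0 < η) :
    volume {x ∈ Icc a b | ENNReal.ofReal η ≤ oscillationWithin f (Icc a b) x} = 0 := by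
  refine le_antisymm (ENNReal.le_of_forall_pos_le_add fun ε hε _ ↦ ?_) zero_le
  obtain ⟨δ, hδ, hosc⟩ := hI.exists_oscillationSum_lt hf (mul_pos hη hε)
  obtain ⟨P, hP⟩ := TaggedPartition.exists_meshLE hab hδ
  simpa using P.volume_setOf_le_oscillationWithin_le hf hη (hosc P hP)

lemma volume_discontinuities_eq_zero (hI : HasRiemannIntegral f a b I) (hab : a ≤ b)
    (hf : Bornology.IsBounded (f '' Icc a b)) :
    volume {x ∈ Icc a b | ¬ ContinuousWithinAt f (Icc a b) x} = 0 := by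
  refine measure_mono_null (fun x hx ↦ ?_) (measure_setOf_ne_zero_eq_zero
    fun η hη ↦ hI.volume_setOf_le_oscillationWithin_eq_zero hab hf hη)
  exact ⟨hx.1, mt (OscillationWithin.eq_zero_iff_continuousWithinAt f hx.1).1 hx.2⟩

end HasRiemannIntegral

lemma hasRiemannIntegral_integral_of_volume_discontinuities_eq_zero {f : ℝ → ℝ} {a b : ℝ} (hab : a ≤ b)
    (hf : Bornology.IsBounded (f '' Icc a b))
    (hD : volume {x ∈ Icc a b | ¬ ContinuousWithinAt f (Icc a b) x} = 0) :
    HasRiemannIntegral f a b (∫ x in a..b, f x) := by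
  have hint := integrableOn_of_measure_discontinuities_eq_zero measurableSet_Icc measure_Icc_lt_top hf hD
  intro ε hε
  obtain ⟨δ, hδ, hosc⟩ := TaggedPartition.exists_forall_meshLE_oscillationSum_le hab hf hD
    (half_pos hε)
  exact ⟨δ, hδ, fun P hP ↦
    ((P.abs_riemannSum_sub_integral_le hint hf).trans (hosc P hP)).trans_lt (half_lt_self hε)⟩

/-- Lebesgue's criterion: a bounded function on `[a, b]` is Riemann
integrable iff its set of discontinuity points in `[a, b]` (relative to
`[a, b]`) has Lebesgue measure zero. -/
theorem riemannIntegrable_iff_discontinuities_null (f : ℝ → ℝ) (a b : ℝ)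
    (hab : a ≤ b) (hbd : ∃ M : ℝ, ∀ x ∈ Set.Icc a b, |f x| ≤ M) :
    RiemannIntegrable f a b ↔
      volume {x ∈ Set.Icc a b | ¬ ContinuousWithinAt f (Set.Icc a b) x} = 0 := by
  obtain ⟨M, hM⟩ := hbd
  have hf : Bornology.IsBounded (f '' Icc a b) :=
    isBounded_iff_forall_norm_le.2 ⟨M, by rintro _ ⟨x, hx, rfl⟩; exact hM x hx⟩
  exact ⟨fun ⟨_, hI⟩ ↦ hI.volume_discontinuities_eq_zero hab hf,
    fun hD ↦ ⟨_, hasRiemannIntegral_integral_of_volume_discontinuities_eq_zero hab hf hD⟩⟩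
end
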